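/- arXiv:2202.07602 — 8 statements merged into one kernel-verified Lean document; each statement's English description precedes it below -/
import Mathlib

section
/- Let A be an invertible n×n real matrix and b ∈ ℝⁿ. For i = 0, …, N−1 let R_i (size n_i × n), R̃_i (size n_i × n) and R_{i,e} (size m_i × n) be real matrices satisfying: (H1) Σ_{i=0}^{N−1} R̃_iᵀ R_i = I_n; (H2) R_i A = R_i A (R_iᵀ R_i + R_{i,e}ᵀ R_{i,e}) for each i; (H3) each local matrix A_i := R_i A R_iᵀ is invertible. Define M_{RAS}^{-1} := Σ_{i=0}^{N−1} R̃_iᵀ A_i^{-1} R_i. Then for any z^{(k)} ∈ ℝⁿ, the RAS update z^{(k+1)} := Σ_{i=0}^{N−1} R̃_iᵀ A_i^{-1} ( R_i b − R_i A R_{i,e}ᵀ R_{i,e} z^{(k)} ) satisfies the Richardson-process formula z^{(k+1)} = z^{(k)} + M_{RAS}^{-1} ( b − A z^{(k)} ). -/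
/-!
By (H2), the coupling term `Rᵢ A Rᵢₑᵀ Rᵢₑ z` equals `Rᵢ A z − Aᵢ Rᵢ z`, so each local solve of the
RAS update is `Aᵢ⁻¹ (Aᵢ Rᵢ z + Rᵢ (b − A z)) = Rᵢ z + Aᵢ⁻¹ Rᵢ (b − A z)`. Summing against `R̃ᵢᵀ`,
the partition of unity (H1) turns the first parts into `z` and the second parts into
`M_RAS⁻¹ (b − A z)`.
-/

open Matrix

namespace Matrix

variable {m n k α : Type*} [Fintype m] [Fintype n] [Fintype k]

theorem mulVec_external_coupling [CommRing α] {R : Matrix m n α} {A : Matrix n n α}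
    {Re : Matrix k n α} (hsupp : R * A = R * A * (Rᵀ * R + Reᵀ * Re)) (z : n → α) :
    R *ᵥ (A *ᵥ (Reᵀ *ᵥ (Re *ᵥ z))) = R *ᵥ (A *ᵥ z) - (R * A * Rᵀ) *ᵥ (R *ᵥ z) := by
  have hz := congrArg (· *ᵥ z) hsupp
  simp only [Matrix.mul_add, add_mulVec, ← mulVec_mulVec] at hz ⊢
  rw [hz]
  abel

theorem local_solve_eq_restrict_add_correction [DecidableEq m] [CommRing α] {R : Matrix m n α}
    {A : Matrix n n α} {Re : Matrix k n α} (hsupp : R * A = R * A * (Rᵀ * R + Reᵀ * Re))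
    (hloc : IsUnit (R * A * Rᵀ)) (b z : n → α) :
    (R * A * Rᵀ)⁻¹ *ᵥ (R *ᵥ b - R *ᵥ (A *ᵥ (Reᵀ *ᵥ (Re *ᵥ z)))) =
      R *ᵥ z + ((R * A * Rᵀ)⁻¹ * R) *ᵥ (b - A *ᵥ z) := by
  have hrhs : R *ᵥ b - R *ᵥ (A *ᵥ (Reᵀ *ᵥ (Re *ᵥ z))) =
      (R * A * Rᵀ) *ᵥ (R *ᵥ z) + R *ᵥ (b - A *ᵥ z) := by
    rw [mulVec_external_coupling hsupp, mulVec_sub]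
    abel
  rw [hrhs, mulVec_add, mulVec_mulVec, nonsing_inv_mul _ ((isUnit_iff_isUnit_det _).mp hloc),
    one_mulVec, mulVec_mulVec]

end Matrix

theorem ras_is_richardson_general
    (n N : ℕ) (A : Matrix (Fin n) (Fin n) ℝ) (b : Fin n → ℝ)
    (ni mi : Fin N → ℕ)
    (R : ∀ i : Fin N, Matrix (Fin (ni i)) (Fin n) ℝ)
    (Rtil : ∀ i : Fin N, Matrix (Fin (ni i)) (Fin n) ℝ)
    (Rie : ∀ i : Fin N, Matrix (Fin (mi i)) (Fin n) ℝ)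
    (H1 : ∑ i : Fin N, (Rtil i)ᵀ * R i = 1)
    (H2 : ∀ i : Fin N, R i * A = R i * A * ((R i)ᵀ * R i + (Rie i)ᵀ * Rie i))
    (H3 : ∀ i : Fin N, IsUnit (R i * A * (R i)ᵀ))
    (Minv : Matrix (Fin n) (Fin n) ℝ)
    (hM : Minv = ∑ i : Fin N, (Rtil i)ᵀ * (R i * A * (R i)ᵀ)⁻¹ * R i)
    (zk zk1 : Fin n → ℝ)
    (hupdate : zk1 = ∑ i : Fin N, (Rtil i)ᵀ *ᵥ ((R i * A * (R i)ᵀ)⁻¹ *ᵥ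
      (R i *ᵥ b - R i *ᵥ (A *ᵥ ((Rie i)ᵀ *ᵥ (Rie i *ᵥ zk))))) ) :
    zk1 = zk + Minv *ᵥ (b - A *ᵥ zk) := by
  simp_rw [hupdate, local_solve_eq_restrict_add_correction (H2 _) (H3 _), mulVec_add,
    mulVec_mulVec, Finset.sum_add_distrib, ← sum_mulVec, H1, one_mulVec, hM, Matrix.mul_assoc]

/-- The restricted additive Schwarz (RAS) update for `A z = b` can be written
as a Richardson process `z^{(k+1)} = z^{(k)} + M_{RAS}⁻¹ (b − A z^{(k)})` with
`M_{RAS}⁻¹ = Σᵢ R̃ᵢᵀ Aᵢ⁻¹ Rᵢ`. -/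
theorem ras_is_richardson
    (n N : ℕ) (A : Matrix (Fin n) (Fin n) ℝ) (hA : IsUnit A) (b : Fin n → ℝ)
    (ni mi : Fin N → ℕ)
    (R : ∀ i : Fin N, Matrix (Fin (ni i)) (Fin n) ℝ)
    (Rtil : ∀ i : Fin N, Matrix (Fin (ni i)) (Fin n) ℝ)
    (Rie : ∀ i : Fin N, Matrix (Fin (mi i)) (Fin n) ℝ)
    (H1 : ∑ i : Fin N, (Rtil i)ᵀ * R i = 1)
    (H2 : ∀ i : Fin N, R i * A = R i * A * ((R i)ᵀ * R i + (Rie i)ᵀ * Rie i))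
    (H3 : ∀ i : Fin N, IsUnit (R i * A * (R i)ᵀ))
    (Minv : Matrix (Fin n) (Fin n) ℝ)
    (hM : Minv = ∑ i : Fin N, (Rtil i)ᵀ * (R i * A * (R i)ᵀ)⁻¹ * R i)
    (zk zk1 : Fin n → ℝ)
    (hupdate : zk1 = ∑ i : Fin N, (Rtil i)ᵀ *ᵥ ((R i * A * (R i)ᵀ)⁻¹ *ᵥ
      (R i *ᵥ b - R i *ᵥ (A *ᵥ ((Rie i)ᵀ *ᵥ (Rie i *ᵥ zk))))) ) :
    zk1 = zk + Minv *ᵥ (b - A *ᵥ zk) :=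
  ras_is_richardson_general n N A b ni mi R Rtil Rie H1 H2 H3 Minv hM zk zk1 hupdate
end

section
/- Under the hypotheses (H1), (H2), (H3) of the RAS/Richardson setting (Σ_i R̃_iᵀ R_i = I_n; R_i A = R_i A (R_iᵀ R_i + R_{i,e}ᵀ R_{i,e}); A_i := R_i A R_iᵀ invertible; M_{RAS}^{-1} := Σ_i R̃_iᵀ A_i^{-1} R_i), let R_Γ be an n_Γ × n real matrix satisfying R_{i,e}ᵀ R_{i,e} R_Γᵀ R_Γ = R_{i,e}ᵀ R_{i,e} for every i. Then the Richardson iteration z^{(k+1)} = z^{(k)} + M_{RAS}^{-1}(b − A z^{(k)}) restricted to the interface satisfies R_Γ z^{(k+1)} = P (R_Γ z^{(k)}) + c, where P := R_Γ (I − M_{RAS}^{-1} A) R_Γᵀ and c := R_Γ M_{RAS}^{-1} b. -/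
open Matrix

/-!
By (H2), the local solve gives `A_i⁻¹ R_i A = R_i + A_i⁻¹ R_i A R_{i,e}ᵀ R_{i,e}`, so after summing
with the weights `R̃_iᵀ` and using (H1), `I − M⁻¹ A` is a sum of terms ending in `R_{i,e}ᵀ R_{i,e}`.
Since each `W_{i,e}` lies in `Γ`, the error operator only sees interface values:
`(I − M⁻¹ A) R_Γᵀ R_Γ = I − M⁻¹ A`. Restricting one Richardson step to `Γ` is then an affine map
of `R_Γ z` with linear part `R_Γ (I − M⁻¹ A) R_Γᵀ`.
-/

theorem mulVec_richardson_step {K m n : Type*} [Ring K] [Fintype m] [Fintype n] [DecidableEq n]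
    {A M : Matrix n n K} {S : Matrix m n K}
    (hS : (1 - M * A) * (Sᵀ * S) = 1 - M * A) (b z : n → K) :
    S *ᵥ (z + M *ᵥ (b - A *ᵥ z)) = (S * (1 - M * A) * Sᵀ) *ᵥ (S *ᵥ z) + S *ᵥ (M *ᵥ b) := by
  have hrestrict : S * (1 - M * A) * Sᵀ * S = S * (1 - M * A) := by
    rw [Matrix.mul_assoc, Matrix.mul_assoc, hS]
  rw [mulVec_mulVec, hrestrict, Matrix.mul_sub, Matrix.mul_one, sub_mulVec]
  simp only [mulVec_add, mulVec_sub, mulVec_mulVec]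
  abel

theorem localSolve_mul_eq {K n r s : Type*} [CommRing K] [Fintype n] [Fintype r] [DecidableEq r]
    [Fintype s] {A : Matrix n n K} {R : Matrix r n K} {Re : Matrix s n K}
    (hext : R * A = R * A * (Rᵀ * R + Reᵀ * Re)) (hloc : IsUnit (R * A * Rᵀ)) :
    (R * A * Rᵀ)⁻¹ * (R * A) = R + (R * A * Rᵀ)⁻¹ * (R * A) * (Reᵀ * Re) := by
  have hinv : (R * A * Rᵀ)⁻¹ * (R * A * Rᵀ) = 1 :=
    nonsing_inv_mul _ ((isUnit_iff_isUnit_det _).mp hloc)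
  calc (R * A * Rᵀ)⁻¹ * (R * A)
      = (R * A * Rᵀ)⁻¹ * (R * A * (Rᵀ * R + Reᵀ * Re)) := by rw [← hext]
    _ = (R * A * Rᵀ)⁻¹ * (R * A * Rᵀ) * R + (R * A * Rᵀ)⁻¹ * (R * A) * (Reᵀ * Re) := by
      simp only [Matrix.mul_add, Matrix.mul_assoc]
    _ = R + (R * A * Rᵀ)⁻¹ * (R * A) * (Reᵀ * Re) := by rw [hinv, Matrix.one_mul]

section RAS

variable {K n ι : Type*} [CommRing K] [Fintype n] [DecidableEq n] [Fintype ι]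
  {p q : ι → Type*} [∀ i, Fintype (p i)] [∀ i, DecidableEq (p i)] [∀ i, Fintype (q i)]

noncomputable def rasPrecond (A : Matrix n n K) (R Rtil : ∀ i, Matrix (p i) n K) :
    Matrix n n K :=
  ∑ i, (Rtil i)ᵀ * (R i * A * (R i)ᵀ)⁻¹ * R i

theorem one_sub_rasPrecond_mul {A : Matrix n n K} {R Rtil : ∀ i, Matrix (p i) n K}
    {Re : ∀ i, Matrix (q i) n K} (hpart : ∑ i, (Rtil i)ᵀ * R i = 1)
    (hext : ∀ i, R i * A = R i * A * ((R i)ᵀ * R i + (Re i)ᵀ * Re i))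
    (hloc : ∀ i, IsUnit (R i * A * (R i)ᵀ)) :
    1 - rasPrecond A R Rtil * A =
      -∑ i, (Rtil i)ᵀ * ((R i * A * (R i)ᵀ)⁻¹ * (R i * A)) * ((Re i)ᵀ * Re i) := by
  have hterm : ∀ i, (Rtil i)ᵀ * (R i * A * (R i)ᵀ)⁻¹ * R i * A =
      (Rtil i)ᵀ * R i + (Rtil i)ᵀ * ((R i * A * (R i)ᵀ)⁻¹ * (R i * A)) * ((Re i)ᵀ * Re i) := by
    intro i
    rw [Matrix.mul_assoc _ (R i) A, Matrix.mul_assoc (Rtil i)ᵀ]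
    nth_rewrite 1 [localSolve_mul_eq (hext i) (hloc i)]
    rw [Matrix.mul_add, Matrix.mul_assoc (Rtil i)ᵀ]
  rw [rasPrecond, Finset.sum_mul, Finset.sum_congr rfl fun i _ => hterm i,
    Finset.sum_add_distrib, hpart]
  abel

theorem one_sub_rasPrecond_mul_mul_interface {m : Type*} [Fintype m] {A : Matrix n n K}
    {R Rtil : ∀ i, Matrix (p i) n K} {Re : ∀ i, Matrix (q i) n K} {RΓ : Matrix m n K}
    (hpart : ∑ i, (Rtil i)ᵀ * R i = 1)
    (hext : ∀ i, R i * A = R i * A * ((R i)ᵀ * R i + (Re i)ᵀ * Re i))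
    (hloc : ∀ i, IsUnit (R i * A * (R i)ᵀ))
    (hΓ : ∀ i, (Re i)ᵀ * Re i * (RΓᵀ * RΓ) = (Re i)ᵀ * Re i) :
    (1 - rasPrecond A R Rtil * A) * (RΓᵀ * RΓ) = 1 - rasPrecond A R Rtil * A := by
  rw [one_sub_rasPrecond_mul hpart hext hloc, neg_mul, Finset.sum_mul]
  exact congrArg _ (Finset.sum_congr rfl fun i _ => by rw [Matrix.mul_assoc, hΓ])

end RAS

theorem ras_interface_iteration_general
    (n N nΓ : ℕ) (A : Matrix (Fin n) (Fin n) ℝ) (b : Fin n → ℝ)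
    (ni mi : Fin N → ℕ)
    (R : ∀ i : Fin N, Matrix (Fin (ni i)) (Fin n) ℝ)
    (Rtil : ∀ i : Fin N, Matrix (Fin (ni i)) (Fin n) ℝ)
    (Rie : ∀ i : Fin N, Matrix (Fin (mi i)) (Fin n) ℝ)
    (H1 : ∑ i : Fin N, (Rtil i)ᵀ * R i = 1)
    (H2 : ∀ i : Fin N, R i * A = R i * A * ((R i)ᵀ * R i + (Rie i)ᵀ * Rie i))
    (H3 : ∀ i : Fin N, IsUnit (R i * A * (R i)ᵀ))
    (Minv : Matrix (Fin n) (Fin n) ℝ)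
    (hM : Minv = ∑ i : Fin N, (Rtil i)ᵀ * (R i * A * (R i)ᵀ)⁻¹ * R i)
    (RΓ : Matrix (Fin nΓ) (Fin n) ℝ)
    (hΓ : ∀ i : Fin N, (Rie i)ᵀ * Rie i * (RΓᵀ * RΓ) = (Rie i)ᵀ * Rie i)
    (P : Matrix (Fin nΓ) (Fin nΓ) ℝ) (hP : P = RΓ * (1 - Minv * A) * RΓᵀ)
    (c : Fin nΓ → ℝ) (hc : c = RΓ *ᵥ (Minv *ᵥ b))
    (zk zk1 : Fin n → ℝ) (hupdate : zk1 = zk + Minv *ᵥ (b - A *ᵥ zk)) :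
    RΓ *ᵥ zk1 = P *ᵥ (RΓ *ᵥ zk) + c := by
  have hMinv : Minv = rasPrecond A R Rtil := hM
  subst hMinv hP hc hupdate
  exact mulVec_richardson_step (one_sub_rasPrecond_mul_mul_interface H1 H2 H3 hΓ) b zk

/-- Restricting the RAS/Richardson iteration
`z^{(k+1)} = z^{(k)} + M_{RAS}⁻¹(b − A z^{(k)})` to the interface `Γ` gives an
affine iteration `R_Γ z^{(k+1)} = P (R_Γ z^{(k)}) + c` with iteration-independent
error operator `P = R_Γ (I − M_{RAS}⁻¹ A) R_Γᵀ` and `c = R_Γ M_{RAS}⁻¹ b`. -/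
theorem ras_interface_iteration
    (n N nΓ : ℕ) (A : Matrix (Fin n) (Fin n) ℝ) (hA : IsUnit A) (b : Fin n → ℝ)
    (ni mi : Fin N → ℕ)
    (R : ∀ i : Fin N, Matrix (Fin (ni i)) (Fin n) ℝ)
    (Rtil : ∀ i : Fin N, Matrix (Fin (ni i)) (Fin n) ℝ)
    (Rie : ∀ i : Fin N, Matrix (Fin (mi i)) (Fin n) ℝ)
    (H1 : ∑ i : Fin N, (Rtil i)ᵀ * R i = 1)
    (H2 : ∀ i : Fin N, R i * A = R i * A * ((R i)ᵀ * R i + (Rie i)ᵀ * Rie i))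
    (H3 : ∀ i : Fin N, IsUnit (R i * A * (R i)ᵀ))
    (Minv : Matrix (Fin n) (Fin n) ℝ)
    (hM : Minv = ∑ i : Fin N, (Rtil i)ᵀ * (R i * A * (R i)ᵀ)⁻¹ * R i)
    (RΓ : Matrix (Fin nΓ) (Fin n) ℝ)
    (hΓ : ∀ i : Fin N, (Rie i)ᵀ * Rie i * (RΓᵀ * RΓ) = (Rie i)ᵀ * Rie i)
    (P : Matrix (Fin nΓ) (Fin nΓ) ℝ) (hP : P = RΓ * (1 - Minv * A) * RΓᵀ)
    (c : Fin nΓ → ℝ) (hc : c = RΓ *ᵥ (Minv *ᵥ b))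
    (zk zk1 : Fin n → ℝ) (hupdate : zk1 = zk + Minv *ᵥ (b - A *ᵥ zk)) :
    RΓ *ᵥ zk1 = P *ᵥ (RΓ *ᵥ zk) + c :=
  ras_interface_iteration_general n N nΓ A b ni mi R Rtil Rie H1 H2 H3 Minv hM RΓ hΓ P hP c hc zk
    zk1 hupdate
end

section
/- In the RAS/Richardson setting with N = 2 partitions (hypotheses: Σ_{i=0}^{1} R̃_iᵀ R_i = I_n; R_i A = R_i A (R_iᵀ R_i + R_{i,e}ᵀ R_{i,e}); A_i := R_i A R_iᵀ invertible; M_{RAS}^{-1} := Σ_i R̃_iᵀ A_i^{-1} R_i), assume in addition that R_{0,e} R_{0,e}ᵀ = I, R_{1,e} R_{1,e}ᵀ = I, R_{1,e} R_{0,e}ᵀ = 0, R_{0,e} R̃_0ᵀ = 0 and R_{1,e} R̃_1ᵀ = 0. Then the interface error operator has antidiagonal block structure: R_{0,e} (I − M_{RAS}^{-1} A) R_{0,e}ᵀ = 0 and R_{1,e} (I − M_{RAS}^{-1} A) R_{1,e}ᵀ = 0, while R_{0,e} (I − M_{RAS}^{-1} A) R_{1,e}ᵀ = − R_{0,e} R̃_1ᵀ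 A_1^{-1} R_1 A R_{1,e}ᵀ and R_{1,e} (I − M_{RAS}^{-1} A) R_{0,e}ᵀ = − R_{1,e} R̃_0ᵀ A_0^{-1} R_0 A R_{0,e}ᵀ; hence the interface errors satisfy (e_0, e_1)^{(k+1)} = [[0, P_0],[P_1, 0]] (e_0, e_1)^{(k)} for these blocks P_0, P_1. -/
open Matrix

/-!
Because the interfaces are disjoint and each `R_{i,e}` annihilates `R̃_i`, the row `R_{i,e} M⁻¹`
only sees the subdomain solve of the other partition `j`. The overlap condition
`R_j A = R_j A (R_jᵀ R_j + R_{j,e}ᵀ R_{j,e})` turns `A_j⁻¹ R_j A` into `R_j` plus a correction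
supported on the interface `W_{j,e}`; the `R_j` part cancels against `R_{i,e}` by the partition
of unity, so `R_{i,e} (I − M⁻¹ A)` factors through `R_{j,e}`.
-/

section

variable {𝕜 : Type*} [CommRing 𝕜] {n : Type*} [Fintype n]

theorem inv_mul_eq_add_of_mul_eq {m κ : Type*} [Fintype m] [DecidableEq m] [Fintype κ]
    (X : Matrix m n 𝕜) (C : Matrix n m 𝕜) (B : Matrix m n 𝕜) (D : Matrix n κ 𝕜)
    (E : Matrix κ n 𝕜) (hX : X = X * (C * B + D * E)) (hXC : IsUnit (X * C)) :
    (X * C)⁻¹ * X = B + (X * C)⁻¹ * (X * D) * E := by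
  have hinv : (X * C)⁻¹ * (X * C) = 1 :=
    nonsing_inv_mul _ ((isUnit_iff_isUnit_det _).mp hXC)
  calc (X * C)⁻¹ * X = (X * C)⁻¹ * (X * (C * B + D * E)) := by rw [← hX]
    _ = (X * C)⁻¹ * (X * C) * B + (X * C)⁻¹ * (X * D) * E := by
      simp only [Matrix.mul_add, Matrix.mul_assoc]
    _ = B + (X * C)⁻¹ * (X * D) * E := by rw [hinv, Matrix.one_mul]

theorem interface_mul_ras_error_eq {ι κ mₑ m₁ : Type*} [Fintype ι] [DecidableEq ι] [Fintype κ]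
    [DecidableEq κ] [Fintype m₁] [DecidableEq n] (A : Matrix n n 𝕜)
    (R0 T0 : Matrix ι n 𝕜) (R1 T1 : Matrix κ n 𝕜) (E : Matrix mₑ n 𝕜) (E1 : Matrix m₁ n 𝕜)
    (hsum : T0ᵀ * R0 + T1ᵀ * R1 = 1) (hE : E * T0ᵀ = 0)
    (hloc : R1 * A = R1 * A * (R1ᵀ * R1 + E1ᵀ * E1)) (hunit : IsUnit (R1 * A * R1ᵀ)) :
    E * (1 - (T0ᵀ * (R0 * A * R0ᵀ)⁻¹ * R0 + T1ᵀ * (R1 * A * R1ᵀ)⁻¹ * R1) * A) =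
      -(E * T1ᵀ * (R1 * A * R1ᵀ)⁻¹ * R1 * A * E1ᵀ) * E1 := by
  have hE0 : E * (T0ᵀ * (R0 * A * R0ᵀ)⁻¹ * R0 * A) = 0 := by
    simp only [← Matrix.mul_assoc, hE, Matrix.zero_mul]
  have hE1 : E * T1ᵀ * R1 = E := by
    rw [Matrix.mul_assoc, eq_sub_of_add_eq' hsum, Matrix.mul_sub, ← Matrix.mul_assoc, hE,
      Matrix.zero_mul, sub_zero, Matrix.mul_one]
  have hsolve := inv_mul_eq_add_of_mul_eq (R1 * A) R1ᵀ R1 E1ᵀ E1 hloc hunit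
  calc E * (1 - (T0ᵀ * (R0 * A * R0ᵀ)⁻¹ * R0 + T1ᵀ * (R1 * A * R1ᵀ)⁻¹ * R1) * A)
      = E - E * T1ᵀ * ((R1 * A * R1ᵀ)⁻¹ * (R1 * A)) := by
        rw [Matrix.mul_sub, Matrix.add_mul, Matrix.mul_add, hE0]
        simp only [Matrix.mul_one, zero_add, Matrix.mul_assoc]
    _ = -(E * T1ᵀ * (R1 * A * R1ᵀ)⁻¹ * R1 * A * E1ᵀ) * E1 := by
        rw [hsolve, Matrix.mul_add, ← Matrix.mul_assoc, hE1]
        simp only [Matrix.mul_assoc, Matrix.neg_mul, sub_add_cancel_left]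

end

section

variable {𝕜 : Type*} [CommRing 𝕜] {l m n p : Type*} [Fintype n] [Fintype p]
  {F : Matrix l n 𝕜} {T : Matrix n n 𝕜} {P : Matrix l p 𝕜} {G : Matrix p n 𝕜}

theorem mul_mul_transpose_eq_of_mul_eq [DecidableEq p] (h : F * T = P * G)
    (hG : G * Gᵀ = 1) : F * T * Gᵀ = P := by
  rw [h, Matrix.mul_assoc, hG, Matrix.mul_one]

theorem mul_mul_transpose_eq_zero_of_mul_eq {H : Matrix m n 𝕜} (h : F * T = P * G)
    (hGH : G * Hᵀ = 0) : F * T * Hᵀ = 0 := by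
  rw [h, Matrix.mul_assoc, hGH, Matrix.mul_zero]

theorem mulVec_mulVec_eq_of_mul_eq (h : F * T = P * G) (u : n → 𝕜) :
    F *ᵥ (T *ᵥ u) = P *ᵥ (G *ᵥ u) := by
  rw [mulVec_mulVec, mulVec_mulVec, h]

end

theorem ras_two_partitions_interface_error_operator_general
    (n n₀ n₁ m₀ m₁ : ℕ) (A : Matrix (Fin n) (Fin n) ℝ)
    (R0 Rtil0 : Matrix (Fin n₀) (Fin n) ℝ) (R1 Rtil1 : Matrix (Fin n₁) (Fin n) ℝ)
    (R0e : Matrix (Fin m₀) (Fin n) ℝ) (R1e : Matrix (Fin m₁) (Fin n) ℝ)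
    (H1 : Rtil0ᵀ * R0 + Rtil1ᵀ * R1 = 1)
    (H2₀ : R0 * A = R0 * A * (R0ᵀ * R0 + R0eᵀ * R0e))
    (H2₁ : R1 * A = R1 * A * (R1ᵀ * R1 + R1eᵀ * R1e))
    (H3₀ : IsUnit (R0 * A * R0ᵀ)) (H3₁ : IsUnit (R1 * A * R1ᵀ))
    (Minv : Matrix (Fin n) (Fin n) ℝ)
    (hM : Minv = Rtil0ᵀ * (R0 * A * R0ᵀ)⁻¹ * R0 + Rtil1ᵀ * (R1 * A * R1ᵀ)⁻¹ * R1)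
    (h0e : R0e * R0eᵀ = 1) (h1e : R1e * R1eᵀ = 1) (h10 : R1e * R0eᵀ = 0)
    (h0til : R0e * Rtil0ᵀ = 0) (h1til : R1e * Rtil1ᵀ = 0) :
    R0e * (1 - Minv * A) * R0eᵀ = 0 ∧
    R1e * (1 - Minv * A) * R1eᵀ = 0 ∧
    R0e * (1 - Minv * A) * R1eᵀ = -(R0e * Rtil1ᵀ * (R1 * A * R1ᵀ)⁻¹ * R1 * A * R1eᵀ) ∧
    R1e * (1 - Minv * A) * R0eᵀ = -(R1e * Rtil0ᵀ * (R0 * A * R0ᵀ)⁻¹ * R0 * A * R0eᵀ) ∧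
    (∀ u : Fin n → ℝ,
      R0e *ᵥ ((1 - Minv * A) *ᵥ u) =
        (R0e * (1 - Minv * A) * R1eᵀ) *ᵥ (R1e *ᵥ u) ∧
      R1e *ᵥ ((1 - Minv * A) *ᵥ u) =
        (R1e * (1 - Minv * A) * R0eᵀ) *ᵥ (R0e *ᵥ u)) := by
  have h01 : R0e * R1eᵀ = 0 := by
    simpa only [transpose_mul, transpose_transpose, transpose_zero] using congrArg transpose h10
  have E0 : R0e * (1 - Minv * A) = -(R0e * Rtil1ᵀ * (R1 * A * R1ᵀ)⁻¹ * R1 * A * R1eᵀ) * R1e := by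
    rw [hM]
    exact interface_mul_ras_error_eq A R0 Rtil0 R1 Rtil1 R0e R1e H1 h0til H2₁ H3₁
  have E1 : R1e * (1 - Minv * A) = -(R1e * Rtil0ᵀ * (R0 * A * R0ᵀ)⁻¹ * R0 * A * R0eᵀ) * R0e := by
    rw [hM, add_comm]
    exact interface_mul_ras_error_eq A R1 Rtil1 R0 Rtil0 R1e R0e (by rwa [add_comm]) h1til H2₀ H3₀
  have P0 := mul_mul_transpose_eq_of_mul_eq E0 h1e
  have P1 := mul_mul_transpose_eq_of_mul_eq E1 h0e
  refine ⟨mul_mul_transpose_eq_zero_of_mul_eq E0 h10, mul_mul_transpose_eq_zero_of_mul_eq E1 h01,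
    P0, P1, fun u => ⟨?_, ?_⟩⟩
  · rw [P0]; exact mulVec_mulVec_eq_of_mul_eq E0 u
  · rw [P1]; exact mulVec_mulVec_eq_of_mul_eq E1 u

/-- For the RAS/Richardson process with two partitions whose interfaces are
disjoint, the interface error operator has antidiagonal block structure: the
diagonal blocks of `R_{i,e} (I − M_{RAS}⁻¹ A) R_{j,e}ᵀ` vanish, the
antidiagonal blocks are `P₀ = −R_{0,e} R̃₁ᵀ A₁⁻¹ R₁ A R_{1,e}ᵀ` and
`P₁ = −R_{1,e} R̃₀ᵀ A₀⁻¹ R₀ A R_{0,e}ᵀ`, and the interface errors satisfy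
`(e₀, e₁)^{(k+1)} = [[0, P₀], [P₁, 0]] (e₀, e₁)^{(k)}`. -/
theorem ras_two_partitions_interface_error_operator
    (n n₀ n₁ m₀ m₁ : ℕ) (A : Matrix (Fin n) (Fin n) ℝ) (hA : IsUnit A)
    (R0 Rtil0 : Matrix (Fin n₀) (Fin n) ℝ) (R1 Rtil1 : Matrix (Fin n₁) (Fin n) ℝ)
    (R0e : Matrix (Fin m₀) (Fin n) ℝ) (R1e : Matrix (Fin m₁) (Fin n) ℝ)
    (H1 : Rtil0ᵀ * R0 + Rtil1ᵀ * R1 = 1)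
    (H2₀ : R0 * A = R0 * A * (R0ᵀ * R0 + R0eᵀ * R0e))
    (H2₁ : R1 * A = R1 * A * (R1ᵀ * R1 + R1eᵀ * R1e))
    (H3₀ : IsUnit (R0 * A * R0ᵀ)) (H3₁ : IsUnit (R1 * A * R1ᵀ))
    (Minv : Matrix (Fin n) (Fin n) ℝ)
    (hM : Minv = Rtil0ᵀ * (R0 * A * R0ᵀ)⁻¹ * R0 + Rtil1ᵀ * (R1 * A * R1ᵀ)⁻¹ * R1)
    (h0e : R0e * R0eᵀ = 1) (h1e : R1e * R1eᵀ = 1) (h10 : R1e * R0eᵀ = 0)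
    (h0til : R0e * Rtil0ᵀ = 0) (h1til : R1e * Rtil1ᵀ = 0) :
    R0e * (1 - Minv * A) * R0eᵀ = 0 ∧
    R1e * (1 - Minv * A) * R1eᵀ = 0 ∧
    R0e * (1 - Minv * A) * R1eᵀ = -(R0e * Rtil1ᵀ * (R1 * A * R1ᵀ)⁻¹ * R1 * A * R1eᵀ) ∧
    R1e * (1 - Minv * A) * R0eᵀ = -(R1e * Rtil0ᵀ * (R0 * A * R0ᵀ)⁻¹ * R0 * A * R0eᵀ) ∧
    (∀ u : Fin n → ℝ,
      R0e *ᵥ ((1 - Minv * A) *ᵥ u) =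
        (R0e * (1 - Minv * A) * R1eᵀ) *ᵥ (R1e *ᵥ u) ∧
      R1e *ᵥ ((1 - Minv * A) *ᵥ u) =
        (R1e * (1 - Minv * A) * R0eᵀ) *ᵥ (R0e *ᵥ u)) :=
  ras_two_partitions_interface_error_operator_general n n₀ n₁ m₀ m₁ A R0 Rtil0 R1 Rtil1 R0e R1e H1
    H2₀ H2₁ H3₀ H3₁ Minv hM h0e h1e h10 h0til h1til
end

section
/- Let Δt, L₁, L₂, C, G be positive real numbers and let P be the 3×3 real matrix P = [[0, −Δt/L₁, Δt/L₁], [−L₂/Δt + (L₂C/Δt² + L₂G/Δt + 1)/(C/Δt + G), 0, 0], [0, 0, 0]]. Then the characteristic polynomial of P is X·(X² + Δt²/(L₁(C + GΔt))), and the eigenvalues of P over ℂ are exactly 0, i·Δt/√(L₁(C + GΔt)) and −i·Δt/√(L₁(C + GΔt)). -/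
/-!
Writing `a = Δt / L₁`, the entry `b = -L₂/Δt + (L₂C/Δt² + L₂G/Δt + 1)/(C/Δt + G)` collapses to
`Δt / (C + GΔt)`, because its numerator is `(L₂/Δt)(C/Δt + G) + 1`. The matrix
`[[0, -a, a], [b, 0, 0], [0, 0, 0]]` has characteristic polynomial `X (X² + ab)`, and
`ab = Δt² / (L₁(C + GΔt)) = w²` with `w = Δt / √(L₁(C + GΔt))`, so its complex roots are `0, ±i w`.
-/

open Matrix Polynomial

theorem Matrix.charpoly_fin_three_eq_X_mul_X_sq_add_C_mul {R : Type*} [CommRing R] (a b : R) :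
    (!![0, -a, a; b, 0, 0; 0, 0, 0] : Matrix (Fin 3) (Fin 3) R).charpoly =
      X * (X ^ 2 + C (a * b)) := by
  rw [Matrix.charpoly, Matrix.det_fin_three]
  simp [charmatrix, C_mul]
  ring

theorem Matrix.spectrum_map_eq_setOf_isRoot_charpoly {K L n : Type*} [Field K] [Field L]
    [Algebra K L] [Fintype n] [DecidableEq n] (A : Matrix n n K) :
    spectrum L (A.map (algebraMap K L)) =
      {x | (A.charpoly.map (algebraMap K L)).IsRoot x} :=
  Set.ext fun _ => by rw [mem_spectrum_iff_isRoot_charpoly, charpoly_map]; rfl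

theorem Complex.mul_sq_add_sq_eq_zero_iff (x w : ℂ) :
    x * (x ^ 2 + w ^ 2) = 0 ↔ x = 0 ∨ x = I * w ∨ x = -(I * w) := by
  have hfactor : x * (x ^ 2 + w ^ 2) = x * ((x - I * w) * (x + I * w)) := by
    linear_combination (x * w ^ 2) * I_sq
  rw [hfactor, mul_eq_zero, mul_eq_zero, sub_eq_zero, add_eq_zero_iff_eq_neg]

theorem rlc_interface_entry_eq {Δt L₂ C G : ℝ} (hΔt : Δt ≠ 0) (hCG : C + G * Δt ≠ 0) :
    -L₂ / Δt + (L₂ * C / Δt ^ 2 + L₂ * G / Δt + 1) / (C / Δt + G) = Δt / (C + G * Δt) := by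
  have hCG' : C + Δt * G ≠ 0 := by rwa [mul_comm Δt]
  field_simp
  ring

theorem first_example_error_operator_eigenvalues_general
    (Δt L₁ L₂ C G : ℝ) (hΔt : 0 < Δt) (hL₁ : 0 < L₁)
    (hC : 0 < C) (hG : 0 < G)
    (P : Matrix (Fin 3) (Fin 3) ℝ)
    (hP : P = !![0, -Δt / L₁, Δt / L₁;
                 -L₂ / Δt + (L₂ * C / Δt ^ 2 + L₂ * G / Δt + 1) / (C / Δt + G), 0, 0;
                 0, 0, 0]) :
    P.charpoly = X * (X ^ 2 + Polynomial.C (Δt ^ 2 / (L₁ * (C + G * Δt)))) ∧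
    spectrum ℂ (P.map (algebraMap ℝ ℂ)) =
      {0, Complex.I * ((Δt : ℂ) / (Real.sqrt (L₁ * (C + G * Δt)) : ℂ)),
       -(Complex.I * ((Δt : ℂ) / (Real.sqrt (L₁ * (C + G * Δt)) : ℂ)))} := by
  have hCG : 0 < C + G * Δt := by positivity
  have hcharpoly : P.charpoly = X * (X ^ 2 + Polynomial.C (Δt ^ 2 / (L₁ * (C + G * Δt)))) := by
    rw [hP, rlc_interface_entry_eq hΔt.ne' hCG.ne', neg_div,
      Matrix.charpoly_fin_three_eq_X_mul_X_sq_add_C_mul, div_mul_div_comm, ← sq]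
  have hsq : Δt ^ 2 / (L₁ * (C + G * Δt)) = (Δt / Real.sqrt (L₁ * (C + G * Δt))) ^ 2 := by
    rw [div_pow, Real.sq_sqrt (by positivity)]
  refine ⟨hcharpoly, ?_⟩
  ext x
  rw [Matrix.spectrum_map_eq_setOf_isRoot_charpoly, hcharpoly, hsq]
  simp only [Set.mem_ofPred_eq, IsRoot.def, Polynomial.map_mul, Polynomial.map_add,
    Polynomial.map_pow, map_X, map_C, eval_mul, eval_add, eval_pow, eval_X, eval_C, Complex.coe_algebraMap,
    Complex.ofReal_pow, Complex.ofReal_div, Complex.mul_sq_add_sq_eq_zero_iff,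
    Set.mem_insert_iff, Set.mem_singleton_iff]

/-- Characteristic polynomial and complex eigenvalues of the interface error
operator of the dynamic iteration with RAS splitting for the first RLC circuit
example. -/
theorem first_example_error_operator_eigenvalues
    (Δt L₁ L₂ C G : ℝ) (hΔt : 0 < Δt) (hL₁ : 0 < L₁) (hL₂ : 0 < L₂)
    (hC : 0 < C) (hG : 0 < G)
    (P : Matrix (Fin 3) (Fin 3) ℝ)
    (hP : P = !![0, -Δt / L₁, Δt / L₁;
                 -L₂ / Δt + (L₂ * C / Δt ^ 2 + L₂ * G / Δt + 1) / (C / Δt + G), 0, 0;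
                 0, 0, 0]) :
    P.charpoly = X * (X ^ 2 + Polynomial.C (Δt ^ 2 / (L₁ * (C + G * Δt)))) ∧
    spectrum ℂ (P.map (algebraMap ℝ ℂ)) =
      {0, Complex.I * ((Δt : ℂ) / (Real.sqrt (L₁ * (C + G * Δt)) : ℂ)),
       -(Complex.I * ((Δt : ℂ) / (Real.sqrt (L₁ * (C + G * Δt)) : ℂ)))} :=
  first_example_error_operator_eigenvalues_general Δt L₁ L₂ C G hΔt hL₁ hC hG P hP
end

section
/- Let Δt, L₁, L₂, C, G be positive real numbers, let P be the 3×3 real matrix P = [[0, −Δt/L₁, Δt/L₁], [−L₂/Δt + (L₂C/Δt² + L₂G/Δt + 1)/(C/Δt + G), 0, 0], [0, 0, 0]], and set Δt₀ := (L₁G + √((L₁G)² + 4L₁C))/2. Then the spectral radius of P equals Δt/√(L₁(C + GΔt)), and: ρ(P) < 1 if and only if Δt < Δt₀; ρ(P) = 1 if and only if Δt = Δt₀; and ρ(P) > 1 if and only if Δt > Δt₀. -/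
/-!
The complexified operator is `interfaceOperator a b` with `a = Δt/L₁` and `b = Δt/(C + GΔt)`
(`L₂` cancels from the lower-left entry). Its characteristic polynomial is `z (z² + ab)`, so the
eigenvalues are `0, ±i√(ab)` and `ρ(P) = √(ab) = Δt/√(L₁(C + GΔt))`. Comparing `ρ(P)` with `1`
amounts to comparing `Δt²` with `L₁GΔt + L₁C`, and `Δt₀` is the positive root of
`x² - L₁G x - L₁C`.
-/

open Matrix

def interfaceOperator {K : Type*} [Neg K] [Zero K] (a b : K) : Matrix (Fin 3) (Fin 3) K :=
  !![0, -a, a; b, 0, 0; 0, 0, 0]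

theorem det_algebraMap_sub_interfaceOperator {K : Type*} [CommRing K] (a b z : K) :
    (algebraMap K (Matrix (Fin 3) (Fin 3) K) z - interfaceOperator a b).det =
      z * (z ^ 2 + a * b) := by
  simp [interfaceOperator, det_fin_three, algebraMap_matrix_apply]
  ring

theorem interfaceOperator_map {K L : Type*} [Ring K] [Ring L] (f : K →+* L) (a b : K) :
    (interfaceOperator a b).map f = interfaceOperator (f a) (f b) := by
  ext i j
  fin_cases i <;> fin_cases j <;> simp [interfaceOperator]

theorem spectrum_interfaceOperator {a b : ℂ} {μ : ℝ} (hab : a * b = μ ^ 2) :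
    spectrum ℂ (interfaceOperator a b) = {0, Complex.I * μ, -(Complex.I * μ)} := by
  ext z
  rw [spectrum.mem_iff, isUnit_iff_isUnit_det, isUnit_iff_ne_zero, not_not,
    det_algebraMap_sub_interfaceOperator, hab]
  have hfactor : z * (z ^ 2 + (μ : ℂ) ^ 2) = z * (z - Complex.I * μ) * (z + Complex.I * μ) := by
    linear_combination ((μ : ℂ) ^ 2 * z) * Complex.I_sq
  rw [hfactor, mul_eq_zero, mul_eq_zero, sub_eq_zero, add_eq_zero_iff_eq_neg]
  simp only [Set.mem_insert_iff, Set.mem_singleton_iff, or_assoc]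

theorem spectralRadius_interfaceOperator {a b : ℂ} {μ : ℝ} (hμ : 0 ≤ μ) (hab : a * b = μ ^ 2) :
    spectralRadius ℂ (interfaceOperator a b) = ENNReal.ofReal μ := by
  have hnorm : ‖Complex.I * μ‖₊ = Real.toNNReal μ := by
    rw [nnnorm_mul, Complex.nnnorm_I, one_mul, Complex.nnnorm_real,
      Real.nnnorm_of_nonneg hμ, Real.toNNReal_of_nonneg hμ]
  rw [spectralRadius, spectrum_interfaceOperator hab, iSup_insert, iSup_insert, iSup_singleton,
    nnnorm_neg, hnorm]
  simp [ENNReal.ofReal]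

theorem ENNReal.cmp_ofReal_one {x : ℝ} (hx : 0 ≤ x) : cmp (ENNReal.ofReal x) 1 = cmp x 1 := by
  rw [← ENNReal.ofReal_one]
  exact StrictMonoOn.cmp_map_eq (s := Set.Ici 0)
    (fun p hp q _ h => (ENNReal.ofReal_lt_ofReal_iff_of_nonneg hp).2 h) hx
    (Set.mem_Ici.2 zero_le_one)

theorem Real.cmp_div_sqrt_one {x y : ℝ} (hx : 0 ≤ x) (hy : 0 < y) :
    cmp (x / √y) 1 = cmp (x ^ 2) y := by
  have hs : 0 < √y := Real.sqrt_pos.2 hy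
  rw [← cmp_mul_pos_right hs, div_mul_cancel₀ x hs.ne', one_mul,
    ← (pow_left_strictMonoOn₀ two_ne_zero).cmp_map_eq hx hs.le, Real.sq_sqrt hy.le]

-- `x ^ 2 - (p * x + q)` factors as `(x - r₊) * (x - r₋)` with `r₋ ≤ 0 < x`.
theorem cmp_sq_mul_add {p q x : ℝ} (hq : 0 ≤ q) (hx : 0 < x) :
    cmp (x ^ 2) (p * x + q) = cmp x ((p + √(p ^ 2 + 4 * q)) / 2) := by
  set r := √(p ^ 2 + 4 * q)
  have hr : r ^ 2 = p ^ 2 + 4 * q := Real.sq_sqrt (by positivity)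
  have hpr : p ≤ r := Real.le_sqrt_of_sq_le (by linarith)
  have hlow : 0 < x - (p - r) / 2 := by linarith
  have hfactor : x ^ 2 - (p * x + q) = (x - (p + r) / 2) * (x - (p - r) / 2) := by
    linear_combination hr / 4
  rw [← cmp_sub_zero, hfactor, ← zero_mul (x - (p - r) / 2), cmp_mul_pos_right hlow, cmp_sub_zero]

theorem interface_entry_eq {Δt L₂ C G : ℝ} (hΔt : Δt ≠ 0) (hden : C + G * Δt ≠ 0) :
    -L₂ / Δt + (L₂ * C / Δt ^ 2 + L₂ * G / Δt + 1) / (C / Δt + G) = Δt / (C + G * Δt) := by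
  rw [show C / Δt + G = (C + G * Δt) / Δt by field_simp, div_add_div _ _ hΔt (div_ne_zero hden hΔt)]
  field_simp
  ring

theorem first_example_spectral_radius_trichotomy_general
    (Δt L₁ L₂ C G : ℝ) (hΔt : 0 < Δt) (hL₁ : 0 < L₁)
    (hC : 0 < C) (hG : 0 < G)
    (P : Matrix (Fin 3) (Fin 3) ℝ)
    (hP : P = !![0, -Δt / L₁, Δt / L₁;
                 -L₂ / Δt + (L₂ * C / Δt ^ 2 + L₂ * G / Δt + 1) / (C / Δt + G), 0, 0;
                 0, 0, 0])
    (Δt₀ : ℝ) (hΔt₀ : Δt₀ = (L₁ * G + Real.sqrt ((L₁ * G) ^ 2 + 4 * L₁ * C)) / 2) :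
    spectralRadius ℂ (P.map (algebraMap ℝ ℂ)) =
        ENNReal.ofReal (Δt / Real.sqrt (L₁ * (C + G * Δt))) ∧
    (spectralRadius ℂ (P.map (algebraMap ℝ ℂ)) < 1 ↔ Δt < Δt₀) ∧
    (spectralRadius ℂ (P.map (algebraMap ℝ ℂ)) = 1 ↔ Δt = Δt₀) ∧
    (1 < spectralRadius ℂ (P.map (algebraMap ℝ ℂ)) ↔ Δt₀ < Δt) := by
  have hden : 0 < C + G * Δt := by positivity
  have hP' : P = interfaceOperator (Δt / L₁) (Δt / (C + G * Δt)) := by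
    rw [hP, interface_entry_eq hΔt.ne' hden.ne', neg_div]
    rfl
  have hab : Δt / L₁ * (Δt / (C + G * Δt)) = (Δt / √(L₁ * (C + G * Δt))) ^ 2 := by
    rw [div_pow, Real.sq_sqrt (by positivity)]
    field_simp
  have hsr : spectralRadius ℂ (P.map (algebraMap ℝ ℂ)) =
      ENNReal.ofReal (Δt / √(L₁ * (C + G * Δt))) := by
    rw [hP', interfaceOperator_map]
    exact spectralRadius_interfaceOperator (by positivity)
      (by simpa using congrArg Complex.ofReal hab)
  have hcmp : cmp (spectralRadius ℂ (P.map (algebraMap ℝ ℂ))) 1 = cmp Δt Δt₀ := by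
    rw [hsr, ENNReal.cmp_ofReal_one (by positivity), Real.cmp_div_sqrt_one hΔt.le (by positivity),
      show L₁ * (C + G * Δt) = L₁ * G * Δt + L₁ * C by ring, cmp_sq_mul_add (by positivity) hΔt,
      hΔt₀, mul_assoc 4]
  refine ⟨hsr, ?_, ?_, ?_⟩
  · rw [← cmp_eq_lt_iff, hcmp, cmp_eq_lt_iff]
  · rw [← cmp_eq_eq_iff, hcmp, cmp_eq_eq_iff]
  · rw [← cmp_eq_gt_iff, hcmp, cmp_eq_gt_iff]

/-- Spectral radius of the interface error operator for the first RLC circuit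
example, and the convergence/stagnation/divergence trichotomy in terms of the
critical time step `Δt₀ = (L₁G + √((L₁G)² + 4L₁C))/2`. -/
theorem first_example_spectral_radius_trichotomy
    (Δt L₁ L₂ C G : ℝ) (hΔt : 0 < Δt) (hL₁ : 0 < L₁) (hL₂ : 0 < L₂)
    (hC : 0 < C) (hG : 0 < G)
    (P : Matrix (Fin 3) (Fin 3) ℝ)
    (hP : P = !![0, -Δt / L₁, Δt / L₁;
                 -L₂ / Δt + (L₂ * C / Δt ^ 2 + L₂ * G / Δt + 1) / (C / Δt + G), 0, 0;
                 0, 0, 0])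
    (Δt₀ : ℝ) (hΔt₀ : Δt₀ = (L₁ * G + Real.sqrt ((L₁ * G) ^ 2 + 4 * L₁ * C)) / 2) :
    spectralRadius ℂ (P.map (algebraMap ℝ ℂ)) =
        ENNReal.ofReal (Δt / Real.sqrt (L₁ * (C + G * Δt))) ∧
    (spectralRadius ℂ (P.map (algebraMap ℝ ℂ)) < 1 ↔ Δt < Δt₀) ∧
    (spectralRadius ℂ (P.map (algebraMap ℝ ℂ)) = 1 ↔ Δt = Δt₀) ∧
    (1 < spectralRadius ℂ (P.map (algebraMap ℝ ℂ)) ↔ Δt₀ < Δt) :=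
  first_example_spectral_radius_trichotomy_general Δt L₁ L₂ C G hΔt hL₁ hC hG P hP Δt₀ hΔt₀
end

section
/- Let Δt, L₁, L₂, C, G be positive real numbers and let P be the 3×3 real matrix P = [[0, −Δt/L₁, Δt/L₁], [(L₂C/Δt² + L₂G/Δt + 1)/(C/Δt + G), 0, 0], [0, 0, 0]]. Then the characteristic polynomial of P is X·(X² + L₂/L₁ + Δt²/(L₁(C + GΔt))), and the eigenvalues of P over ℂ are exactly 0, i·√(L₂/L₁ + Δt²/(L₁(C + GΔt))) and −i·√(L₂/L₁ + Δt²/(L₁(C + GΔt))). -/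
open Matrix Polynomial

/-!
The third row of `P` vanishes and its only other entries couple the first coordinate with the
last two, so the characteristic polynomial of `!![0, p, q; r, 0, 0; 0, 0, 0]` is `X (X² - p r)`.
For the error operator, `p r = -(L₂/L₁ + Δt²/(L₁(C + GΔt)))` is negative, hence the nonzero
eigenvalues are the purely imaginary pair `±i √(L₂/L₁ + Δt²/(L₁(C + GΔt)))`.
-/

theorem Matrix.charpoly_fin_three_coupling {R : Type*} [CommRing R] (p q r : R) :
    (!![0, p, q; r, 0, 0; 0, 0, 0] : Matrix (Fin 3) (Fin 3) R).charpoly =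
      X * (X ^ 2 - Polynomial.C (p * r)) := by
  rw [Matrix.charpoly, Matrix.det_fin_three]
  simp only [Fin.isValue, charmatrix_apply_eq, charmatrix_apply_ne, of_apply, cons_val',
    cons_val_zero, cons_val_one, cons_val, cons_val_fin_one, ne_eq, Fin.reduceEq,
    not_false_eq_true, zero_ne_one, one_ne_zero, map_zero, map_mul, sub_zero, neg_zero,
    mul_zero, mul_neg, neg_mul, neg_neg, add_zero]
  ring

theorem Complex.isRoot_X_mul_X_sq_add_ofReal_iff {a : ℝ} (ha : 0 ≤ a) {z : ℂ} :
    (X * (X ^ 2 + Polynomial.C (a : ℂ))).IsRoot z ↔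
      z = 0 ∨ z = I * (Real.sqrt a : ℂ) ∨ z = -(I * (Real.sqrt a : ℂ)) := by
  have hsq : (I * (Real.sqrt a : ℂ)) ^ 2 = -(a : ℂ) := by
    rw [mul_pow, I_sq, ← ofReal_pow, Real.sq_sqrt ha]; ring
  have hfac : z * (z ^ 2 + a) = z * ((z - I * Real.sqrt a) * (z + I * Real.sqrt a)) := by
    linear_combination z * hsq
  simp only [IsRoot.def, eval_mul, eval_add, eval_pow, eval_X, eval_C, hfac, mul_eq_zero,
    sub_eq_zero, add_eq_zero_iff_eq_neg]

theorem rlc_coupling_mul_eq {Δt L₁ L₂ C G : ℝ} (hΔt : Δt ≠ 0) (hL₁ : L₁ ≠ 0)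
    (hCG : C + G * Δt ≠ 0) :
    -Δt / L₁ * ((L₂ * C / Δt ^ 2 + L₂ * G / Δt + 1) / (C / Δt + G)) =
      -(L₂ / L₁ + Δt ^ 2 / (L₁ * (C + G * Δt))) := by
  rw [div_add' _ _ _ hΔt]
  rw [mul_comm G] at hCG ⊢
  field_simp

/-- Characteristic polynomial and complex eigenvalues of the interface error
operator of the dynamic iteration with RAS splitting for the second RLC
circuit example (the index-2 DAE). -/
theorem second_example_error_operator_eigenvalues
    (Δt L₁ L₂ C G : ℝ) (hΔt : 0 < Δt) (hL₁ : 0 < L₁) (hL₂ : 0 < L₂)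
    (hC : 0 < C) (hG : 0 < G)
    (P : Matrix (Fin 3) (Fin 3) ℝ)
    (hP : P = !![0, -Δt / L₁, Δt / L₁;
                 (L₂ * C / Δt ^ 2 + L₂ * G / Δt + 1) / (C / Δt + G), 0, 0;
                 0, 0, 0]) :
    P.charpoly = X * (X ^ 2 +
        Polynomial.C (L₂ / L₁ + Δt ^ 2 / (L₁ * (C + G * Δt)))) ∧
    spectrum ℂ (P.map (algebraMap ℝ ℂ)) =
      {0, Complex.I * (Real.sqrt (L₂ / L₁ + Δt ^ 2 / (L₁ * (C + G * Δt))) : ℂ),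
       -(Complex.I * (Real.sqrt (L₂ / L₁ + Δt ^ 2 / (L₁ * (C + G * Δt))) : ℂ))} := by
  have hcharpoly : P.charpoly = X * (X ^ 2 +
      Polynomial.C (L₂ / L₁ + Δt ^ 2 / (L₁ * (C + G * Δt)))) := by
    rw [hP, charpoly_fin_three_coupling, rlc_coupling_mul_eq hΔt.ne' hL₁.ne' (by positivity),
      map_neg, sub_neg_eq_add]
  refine ⟨hcharpoly, Set.ext fun z => ?_⟩
  rw [mem_spectrum_iff_isRoot_charpoly, charpoly_map, hcharpoly]
  simp only [Polynomial.map_mul, Polynomial.map_add, Polynomial.map_pow, map_X, map_C,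
    Complex.coe_algebraMap, Set.mem_insert_iff, Set.mem_singleton_iff]
  exact Complex.isRoot_X_mul_X_sq_add_ofReal_iff (by positivity)
end

section
/- Let Δt, L₁, L₂, C, G be positive real numbers with L₂ ≥ L₁, and let P be the 3×3 real matrix P = [[0, −Δt/L₁, Δt/L₁], [(L₂C/Δt² + L₂G/Δt + 1)/(C/Δt + G), 0, 0], [0, 0, 0]]. Then the spectral radius of P equals √(L₂/L₁ + Δt²/(L₁(C + GΔt))) and is strictly greater than 1; hence the dynamic iteration diverges for every choice of positive time step Δt. -/
open Matrix

/-!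
The characteristic polynomial of `!![0, a, b; c, 0, 0; 0, 0, 0]` is `μ (μ² - a c)`, so its
spectral radius is `√‖a c‖`. For the interface error operator, `a c = -(Δt / L₁) k` with `k` the
`(2,1)` entry, and `(Δt / L₁) k = L₂ / L₁ + Δt² / (L₁ (C + G Δt))`: the first summand is at least
`1` because `L₂ ≥ L₁`, the second is positive.
-/

namespace Matrix

theorem mem_spectrum_fin_three_iff {K : Type*} [Field K] (a b c μ : K) :
    μ ∈ spectrum K !![0, a, b; c, 0, 0; 0, 0, 0] ↔ μ * (μ ^ 2 - a * c) = 0 := by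
  have hdet : (algebraMap K _ μ - !![0, a, b; c, 0, 0; 0, 0, 0]).det = μ * (μ ^ 2 - a * c) := by
    simp [det_fin_three, algebraMap_matrix_apply]
    ring
  rw [spectrum.mem_iff, isUnit_iff_isUnit_det, isUnit_iff_ne_zero, not_not, hdet]

theorem spectrum_fin_three_eq {K : Type*} [Field K] {a b c z : K} (hz : z ^ 2 = a * c) :
    spectrum K !![0, a, b; c, 0, 0; 0, 0, 0] = {0, z, -z} := by
  ext μ
  have factor : μ * (μ ^ 2 - a * c) = μ * ((μ - z) * (μ + z)) := by rw [← hz]; ring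
  rw [mem_spectrum_fin_three_iff, factor]
  simp [sub_eq_zero, add_eq_zero_iff_eq_neg]

theorem spectralRadius_fin_three (a b c : ℂ) :
    spectralRadius ℂ !![0, a, b; c, 0, 0; 0, 0, 0] = ENNReal.ofReal √‖a * c‖ := by
  obtain ⟨z, hz⟩ := IsAlgClosed.exists_pow_nat_eq (a * c) two_pos
  have hnorm : √‖a * c‖ = ‖z‖ := by
    rw [← hz, norm_pow, Real.sqrt_sq (norm_nonneg z)]
  rw [spectralRadius, spectrum_fin_three_eq hz, iSup_insert, iSup_insert, iSup_singleton,
    nnnorm_neg, nnnorm_zero, hnorm, ofReal_norm]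
  simp [enorm_eq_nnnorm]

end Matrix

theorem rlc_loop_gain_eq {Δt L₁ L₂ C G : ℝ} (hΔt : Δt ≠ 0) (hL₁ : L₁ ≠ 0)
    (hCG : C + G * Δt ≠ 0) :
    Δt / L₁ * ((L₂ * C / Δt ^ 2 + L₂ * G / Δt + 1) / (C / Δt + G)) =
      L₂ / L₁ + Δt ^ 2 / (L₁ * (C + G * Δt)) := by
  rw [show C / Δt + G = (C + G * Δt) / Δt by field_simp]
  field_simp
  rw [mul_comm Δt G]
  field_simp

theorem second_example_diverges_of_L2_ge_L1_general
    (Δt L₁ L₂ C G : ℝ) (hΔt : 0 < Δt) (hL₁ : 0 < L₁)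
    (hC : 0 < C) (hG : 0 < G) (hL : L₁ ≤ L₂)
    (P : Matrix (Fin 3) (Fin 3) ℝ)
    (hP : P = !![0, -Δt / L₁, Δt / L₁;
                 (L₂ * C / Δt ^ 2 + L₂ * G / Δt + 1) / (C / Δt + G), 0, 0;
                 0, 0, 0]) :
    spectralRadius ℂ (P.map (algebraMap ℝ ℂ)) =
        ENNReal.ofReal (Real.sqrt (L₂ / L₁ + Δt ^ 2 / (L₁ * (C + G * Δt)))) ∧
    1 < spectralRadius ℂ (P.map (algebraMap ℝ ℂ)) := by
  set k := (L₂ * C / Δt ^ 2 + L₂ * G / Δt + 1) / (C / Δt + G)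
  set s := L₂ / L₁ + Δt ^ 2 / (L₁ * (C + G * Δt))
  have hgain : Δt / L₁ * k = s := rlc_loop_gain_eq hΔt.ne' hL₁.ne' (by positivity)
  have hs : 1 < s := lt_add_of_le_of_pos ((one_le_div hL₁).2 hL) (by positivity)
  have hmap : P.map (algebraMap ℝ ℂ) =
      !![0, ((-Δt / L₁ : ℝ) : ℂ), ((Δt / L₁ : ℝ) : ℂ); (k : ℂ), 0, 0; 0, 0, 0] := by
    subst hP
    ext i j
    fin_cases i <;> fin_cases j <;> rfl
  have hradius : spectralRadius ℂ (P.map (algebraMap ℝ ℂ)) = ENNReal.ofReal √s := by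
    rw [hmap, spectralRadius_fin_three, ← Complex.ofReal_mul, Complex.norm_real, neg_div,
      neg_mul, hgain, norm_neg, Real.norm_of_nonneg (by linarith)]
  refine ⟨hradius, hradius ▸ ENNReal.one_lt_ofReal.2 ?_⟩
  rwa [Real.lt_sqrt zero_le_one, one_pow]

/-- For the second RLC circuit example with `L₂ ≥ L₁`, the spectral radius of
the interface error operator `P` equals `√(L₂/L₁ + Δt²/(L₁(C + GΔt)))` and is
strictly greater than `1`: the dynamic iteration diverges for every positive
time step. -/
theorem second_example_diverges_of_L2_ge_L1
    (Δt L₁ L₂ C G : ℝ) (hΔt : 0 < Δt) (hL₁ : 0 < L₁) (hL₂ : 0 < L₂)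
    (hC : 0 < C) (hG : 0 < G) (hL : L₁ ≤ L₂)
    (P : Matrix (Fin 3) (Fin 3) ℝ)
    (hP : P = !![0, -Δt / L₁, Δt / L₁;
                 (L₂ * C / Δt ^ 2 + L₂ * G / Δt + 1) / (C / Δt + G), 0, 0;
                 0, 0, 0]) :
    spectralRadius ℂ (P.map (algebraMap ℝ ℂ)) =
        ENNReal.ofReal (Real.sqrt (L₂ / L₁ + Δt ^ 2 / (L₁ * (C + G * Δt)))) ∧
    1 < spectralRadius ℂ (P.map (algebraMap ℝ ℂ)) :=
  second_example_diverges_of_L2_ge_L1_general Δt L₁ L₂ C G hΔt hL₁ hC hG hL P hP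
end

section
/- Let Δt, L₁, L₂, C, G be positive real numbers with L₂ < L₁, let P be the 3×3 real matrix P = [[0, −Δt/L₁, Δt/L₁], [(L₂C/Δt² + L₂G/Δt + 1)/(C/Δt + G), 0, 0], [0, 0, 0]], and set Δt₀ := ((L₁ − L₂)G + √((L₁ − L₂)²G² + 4(L₁ − L₂)C))/2. Then the spectral radius of P equals √(L₂/L₁ + Δt²/(L₁(C + GΔt))), and: ρ(P) < 1 if and only if Δt < Δt₀; ρ(P) = 1 if and only if Δt = Δt₀; and ρ(P) > 1 if and only if Δt > Δt₀. -/
open Matrix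

/-! The operator has characteristic polynomial `z (z² + cb)` with `c = Δt/L₁` and
`cb = L₂/L₁ + Δt²/(L₁(C + GΔt)) > 0`, so its eigenvalues are `0` and `±i√(cb)` and `ρ(P) = √(cb)`.
Moreover `cb − 1 = (Δt² − (L₁−L₂)GΔt − (L₁−L₂)C) / (L₁(C + GΔt))`, and `Δt₀` is the only positive
root of this quadratic in `Δt`, so `cb − 1` has the sign of `Δt − Δt₀`. -/

def interfaceOp {R : Type*} [Ring R] (b c : R) : Matrix (Fin 3) (Fin 3) R :=
  !![0, -c, c; b, 0, 0; 0, 0, 0]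

theorem interfaceOp_map {R S : Type*} [Ring R] [Ring S] (f : R →+* S) (b c : R) :
    (interfaceOp b c).map f = interfaceOp (f b) (f c) := by
  ext i j
  fin_cases i <;> fin_cases j <;> simp [interfaceOp]

theorem det_algebraMap_sub_interfaceOp {R : Type*} [CommRing R] (b c z : R) :
    (algebraMap R (Matrix (Fin 3) (Fin 3) R) z - interfaceOp b c).det = z * (z ^ 2 + c * b) := by
  simp only [interfaceOp, det_fin_three, Matrix.sub_apply, algebraMap_matrix_apply, Fin.isValue,
    Algebra.algebraMap_self, RingHom.id_apply, of_apply, cons_val', cons_val_zero, cons_val_one,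
    cons_val, cons_val_fin_one, Fin.reduceEq, ↓reduceIte, sub_zero, zero_sub, sub_self]
  ring

theorem spectrum_interfaceOp {K : Type*} [Field K] {b c w : K} (hw : w ^ 2 = -(c * b)) :
    spectrum K (interfaceOp b c) = {0, w, -w} := by
  ext z
  have hfactor : z * (z ^ 2 + c * b) = z * ((z - w) * (z + w)) := by linear_combination z * hw
  simp only [spectrum.mem_iff, isUnit_iff_isUnit_det, det_algebraMap_sub_interfaceOp,
    isUnit_iff_ne_zero, not_not, hfactor, mul_eq_zero, sub_eq_zero, add_eq_zero_iff_eq_neg,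
    Set.mem_insert_iff, Set.mem_singleton_iff]

theorem spectralRadius_interfaceOp {b c : ℝ} (hcb : 0 ≤ c * b) :
    spectralRadius ℂ ((interfaceOp b c).map (algebraMap ℝ ℂ)) =
      ENNReal.ofReal (Real.sqrt (c * b)) := by
  set w : ℂ := Complex.I * (Real.sqrt (c * b) : ℂ)
  have hw : w ^ 2 = -((c : ℂ) * b) := by
    rw [mul_pow, Complex.I_sq, ← Complex.ofReal_pow, Real.sq_sqrt hcb]
    push_cast
    ring
  have hnorm : (‖w‖₊ : ENNReal) = ENNReal.ofReal (Real.sqrt (c * b)) := by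
    rw [← enorm_eq_nnnorm, ← ofReal_norm]
    simp [w]
  rw [interfaceOp_map, Complex.coe_algebraMap, spectralRadius, spectrum_interfaceOp hw,
    iSup_insert, iSup_insert, iSup_singleton, nnnorm_neg, nnnorm_zero, ENNReal.coe_zero,
    max_self, zero_max, hnorm]

theorem exists_pos_sq_sub_mul_sub_eq_mul {p q x : ℝ} (hq : 0 < q) (hx : 0 < x) :
    ∃ k > 0, x ^ 2 - p * x - q = (x - (p + Real.sqrt (p ^ 2 + 4 * q)) / 2) * k := by
  have hroot : p < Real.sqrt (p ^ 2 + 4 * q) := Real.lt_sqrt_of_sq_lt (by linarith)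
  refine ⟨x - (p - Real.sqrt (p ^ 2 + 4 * q)) / 2, by linarith, ?_⟩
  linear_combination (1 / 4 : ℝ) * Real.sq_sqrt (by positivity : 0 ≤ p ^ 2 + 4 * q)

theorem lt_iff_lt_and_eq_iff_eq_of_sub_eq_mul_pos {a b x y k : ℝ} (hk : 0 < k)
    (h : a - b = (x - y) * k) :
    (a < b ↔ x < y) ∧ (a = b ↔ x = y) ∧ (b < a ↔ y < x) := by
  have h' : b - a = (y - x) * k := by linear_combination -h
  refine ⟨?_, ?_, ?_⟩
  · rw [← sub_pos, h', mul_pos_iff_of_pos_right hk, sub_pos]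
  · rw [← sub_eq_zero, h, mul_eq_zero, sub_eq_zero, or_iff_left hk.ne']
  · rw [← sub_pos, h, mul_pos_iff_of_pos_right hk, sub_pos]

/-- For the second RLC circuit example with `L₂ < L₁`, the spectral radius of
the interface error operator equals `√(L₂/L₁ + Δt²/(L₁(C + GΔt)))`, and the
convergence/stagnation/divergence trichotomy holds with the critical time step
`Δt₀ = ((L₁ − L₂)G + √((L₁ − L₂)²G² + 4(L₁ − L₂)C))/2`. -/
theorem second_example_spectral_radius_trichotomy
    (Δt L₁ L₂ C G : ℝ) (hΔt : 0 < Δt) (hL₁ : 0 < L₁) (hL₂ : 0 < L₂)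
    (hC : 0 < C) (hG : 0 < G) (hL : L₂ < L₁)
    (P : Matrix (Fin 3) (Fin 3) ℝ)
    (hP : P = !![0, -Δt / L₁, Δt / L₁;
                 (L₂ * C / Δt ^ 2 + L₂ * G / Δt + 1) / (C / Δt + G), 0, 0;
                 0, 0, 0])
    (Δt₀ : ℝ)
    (hΔt₀ : Δt₀ = ((L₁ - L₂) * G +
        Real.sqrt ((L₁ - L₂) ^ 2 * G ^ 2 + 4 * (L₁ - L₂) * C)) / 2) :
    spectralRadius ℂ (P.map (algebraMap ℝ ℂ)) =
        ENNReal.ofReal (Real.sqrt (L₂ / L₁ + Δt ^ 2 / (L₁ * (C + G * Δt)))) ∧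
    (spectralRadius ℂ (P.map (algebraMap ℝ ℂ)) < 1 ↔ Δt < Δt₀) ∧
    (spectralRadius ℂ (P.map (algebraMap ℝ ℂ)) = 1 ↔ Δt = Δt₀) ∧
    (1 < spectralRadius ℂ (P.map (algebraMap ℝ ℂ)) ↔ Δt₀ < Δt) := by
  set r := L₂ / L₁ + Δt ^ 2 / (L₁ * (C + G * Δt))
  have hP' : P = interfaceOp ((L₂ * C / Δt ^ 2 + L₂ * G / Δt + 1) / (C / Δt + G)) (Δt / L₁) := by
    rw [hP, interfaceOp, neg_div]
  have hcb : Δt / L₁ * ((L₂ * C / Δt ^ 2 + L₂ * G / Δt + 1) / (C / Δt + G)) = r := by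
    simp only [r]
    field_simp
  have hrad : spectralRadius ℂ (P.map (algebraMap ℝ ℂ)) = ENNReal.ofReal (Real.sqrt r) := by
    rw [hP', spectralRadius_interfaceOp (hcb ▸ by positivity), hcb]
  obtain ⟨k, hk, hquad⟩ := exists_pos_sq_sub_mul_sub_eq_mul (p := (L₁ - L₂) * G)
    (mul_pos (sub_pos.mpr hL) hC) hΔt
  have hr : r - 1 = (Δt - Δt₀) * (k / (L₁ * (C + G * Δt))) := by
    rw [hΔt₀, ← mul_pow, mul_assoc 4, ← mul_div_assoc, ← hquad]
    simp only [r]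
    field_simp
    ring
  obtain ⟨hlt, heq, hgt⟩ := lt_iff_lt_and_eq_iff_eq_of_sub_eq_mul_pos (by positivity) hr
  refine ⟨hrad, ?_, ?_, ?_⟩ <;> rw [hrad]
  · rw [ENNReal.ofReal_lt_one, Real.sqrt_lt' one_pos, one_pow, hlt]
  · rw [ENNReal.ofReal_eq_one, Real.sqrt_eq_one, heq]
  · rw [ENNReal.one_lt_ofReal, Real.lt_sqrt zero_le_one, one_pow, hgt]
end
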